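/- Let 0 ≤ k and 2k ≤ n, and define g(n,k) = (1/[n choose k]₂) · ∑_{m=0}^{k} 2^{m²} [n−k choose m]₂ [k choose m]₂ · 2^{−m/2}. Then g(n,k) ≤ C · 2^{−k/2} where C = 9/(2(9/(2√2) − 1)) + 1. -/

import Mathlib

/-- The Gaussian binomial coefficient `[n choose k]₂`, as a real number, with the convention
that it vanishes when `k > n`. -/
noncomputable def gbinomR (n k : ℕ) : ℝ :=
  (∏ i ∈ Finset.range k, ((2 : ℝ) ^ (n - i) - 1)) /
    (∏ i ∈ Finset.range k, ((2 : ℝ) ^ (k - i) - 1))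

/-- `g(n,k) = (1/[n choose k]₂)·∑_{m=0}^k 2^{m²}·[n-k choose m]₂·[k choose m]₂·2^{-m/2}`. -/
noncomputable def gR (n k : ℕ) : ℝ :=
  (gbinomR n k)⁻¹ *
    ∑ m ∈ Finset.range (k + 1),
      2 ^ (m ^ 2) * gbinomR (n - k) m * gbinomR k m * (2 : ℝ) ^ (-(m : ℝ) / 2)

/-!
The summands of `gR n k` are, up to the weights `2^{-m/2}`, the terms
`2^{m²} [n-k choose m]₂ [k choose m]₂` of the `q`-Vandermonde expansion of `[n choose k]₂`.
The last two terms are each at most `[n choose k]₂`, and since `k ≤ n - k` every earlier term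
is at most `2/9` of the next one. Hence `g(n,k)` is bounded by `2^{-k/2}` plus a two-variable
geometric sum in `2/9` and `2^{-1/2}`, which is at most `2^{-k/2} / (2^{-1/2} - 2/9)`.
-/

open Finset

lemma two_pow_sub_one_pos {j : ℕ} (hj : j ≠ 0) : 0 < (2 : ℝ) ^ j - 1 :=
  sub_pos.2 (one_lt_pow₀ one_lt_two hj)

lemma prod_two_pow_sub_one_pos {a m : ℕ} (h : m ≤ a) :
    0 < ∏ i ∈ range m, ((2 : ℝ) ^ (a - i) - 1) :=
  prod_pos fun i hi => two_pow_sub_one_pos (by simp at hi; omega)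

lemma prod_range_succ_two_pow_sub_one (a m : ℕ) :
    ∏ i ∈ range (m + 1), ((2 : ℝ) ^ (a + 1 - i) - 1) =
      (∏ i ∈ range m, ((2 : ℝ) ^ (a - i) - 1)) * (2 ^ (a + 1) - 1) := by
  rw [prod_range_succ', Nat.sub_zero]
  congr 1
  exact prod_congr rfl fun i _ => by rw [Nat.add_sub_add_right]

lemma gbinomR_pos {a m : ℕ} (h : m ≤ a) : 0 < gbinomR a m :=
  div_pos (prod_two_pow_sub_one_pos h) (prod_two_pow_sub_one_pos le_rfl)

lemma gbinomR_nonneg (a m : ℕ) : 0 ≤ gbinomR a m := by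
  have h (c : ℕ) : ∀ i ∈ range m, (0 : ℝ) ≤ 2 ^ (c - i) - 1 :=
    fun i _ => sub_nonneg.2 (one_le_pow₀ one_le_two)
  exact div_nonneg (prod_nonneg (h a)) (prod_nonneg (h m))

lemma gbinomR_self (a : ℕ) : gbinomR a a = 1 :=
  div_self (prod_two_pow_sub_one_pos le_rfl).ne'

lemma gbinomR_succ (a m : ℕ) :
    gbinomR a (m + 1) = gbinomR a m * (2 ^ (a - m) - 1) / (2 ^ (m + 1) - 1) := by
  have hD := (prod_two_pow_sub_one_pos (le_refl m)).ne'
  have he : (2 : ℝ) ^ (m + 1) - 1 ≠ 0 := (two_pow_sub_one_pos m.succ_ne_zero).ne'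
  rw [gbinomR, gbinomR, prod_range_succ, prod_range_succ_two_pow_sub_one]
  field_simp

lemma gbinomR_succ_succ (a m : ℕ) :
    gbinomR (a + 1) (m + 1) = gbinomR a m * (2 ^ (a + 1) - 1) / (2 ^ (m + 1) - 1) := by
  have hD := (prod_two_pow_sub_one_pos (le_refl m)).ne'
  have he : (2 : ℝ) ^ (m + 1) - 1 ≠ 0 := (two_pow_sub_one_pos m.succ_ne_zero).ne'
  rw [gbinomR, gbinomR, prod_range_succ_two_pow_sub_one, prod_range_succ_two_pow_sub_one]
  field_simp

lemma gbinomR_succ_left_self (a : ℕ) : gbinomR (a + 1) a = 2 ^ (a + 1) - 1 := by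
  have he : (2 : ℝ) ^ (a + 1) - 1 ≠ 0 := (two_pow_sub_one_pos a.succ_ne_zero).ne'
  have h := gbinomR_succ (a + 1) a
  rw [gbinomR_self, Nat.add_sub_cancel_left] at h
  field_simp at h
  linarith

lemma two_pow_sq_mul_gbinomR_le (a m : ℕ) : 2 ^ (m ^ 2) * gbinomR a m ≤ gbinomR (a + m) m := by
  have hsq : (2 : ℝ) ^ (m ^ 2) = ∏ _i ∈ range m, (2 : ℝ) ^ m := by
    rw [prod_const, card_range, ← pow_mul, sq]
  rw [gbinomR, gbinomR, ← mul_div_assoc, hsq, ← prod_mul_distrib]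
  refine div_le_div_of_nonneg_right ?_ (prod_two_pow_sub_one_pos le_rfl).le
  refine prod_le_prod
    (fun i _ => mul_nonneg (by positivity) (sub_nonneg.2 (one_le_pow₀ one_le_two))) fun i _ => ?_
  by_cases hia : i ≤ a
  · have h : (2 : ℝ) ^ m * 2 ^ (a - i) = 2 ^ (a + m - i) := by
      rw [← pow_add]; congr 1; omega
    linarith [one_le_pow₀ (M₀ := ℝ) one_le_two (n := m)]
  · rw [Nat.sub_eq_zero_of_le (by omega), pow_zero, sub_self, mul_zero]
    exact sub_nonneg.2 (one_le_pow₀ one_le_two)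

noncomputable def qVandermondeTerm (a b m : ℕ) : ℝ := 2 ^ (m ^ 2) * gbinomR a m * gbinomR b m

lemma qVandermondeTerm_nonneg (a b m : ℕ) : 0 ≤ qVandermondeTerm a b m := by
  unfold qVandermondeTerm
  have := gbinomR_nonneg a m
  have := gbinomR_nonneg b m
  positivity

lemma qVandermondeTerm_succ (a b m : ℕ) :
    qVandermondeTerm a b (m + 1) = qVandermondeTerm a b m *
      (2 ^ (2 * m + 1) * (2 ^ (a - m) - 1) * (2 ^ (b - m) - 1) / (2 ^ (m + 1) - 1) ^ 2) := by
  rw [qVandermondeTerm, qVandermondeTerm, gbinomR_succ, gbinomR_succ,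
    show (m + 1) ^ 2 = m ^ 2 + (2 * m + 1) by ring, pow_add]
  generalize (2 : ℝ) ^ (m + 1) - 1 = e
  ring

lemma qVandermondeTerm_le_two_ninths_mul_succ {a b m : ℕ} (ha : m + 2 ≤ a) (hb : m + 2 ≤ b) :
    qVandermondeTerm a b m ≤ 2 / 9 * qVandermondeTerm a b (m + 1) := by
  have three_le {c : ℕ} (hc : m + 2 ≤ c) : (3 : ℝ) ≤ 2 ^ (c - m) - 1 := by
    have : (2 : ℝ) ^ 2 ≤ 2 ^ (c - m) := pow_le_pow_right₀ one_le_two (by omega)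
    linarith
  have hx := three_le ha
  have hy := three_le hb
  have he : 0 < (2 : ℝ) ^ (m + 1) - 1 := two_pow_sub_one_pos m.succ_ne_zero
  have he2 : ((2 : ℝ) ^ (m + 1) - 1) ^ 2 ≤ 2 * 2 ^ (2 * m + 1) := by
    rw [← pow_succ', show 2 * m + 1 + 1 = 2 * (m + 1) by ring, pow_mul']
    nlinarith
  have hratio : 9 / 2 ≤ 2 ^ (2 * m + 1) * (2 ^ (a - m) - 1) * (2 ^ (b - m) - 1) /
      ((2 : ℝ) ^ (m + 1) - 1) ^ 2 := by
    rw [le_div_iff₀ (by positivity)]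
    have : (0 : ℝ) < 2 ^ (2 * m + 1) := by positivity
    nlinarith [mul_le_mul hx hy (by norm_num) (by linarith)]
  rw [qVandermondeTerm_succ]
  nlinarith [qVandermondeTerm_nonneg a b m]

lemma qVandermondeTerm_le_pow_mul {a b : ℕ} :
    ∀ j m, m + j < a → m + j < b →
      qVandermondeTerm a b m ≤ (2 / 9) ^ j * qVandermondeTerm a b (m + j)
  | 0, m, _, _ => by simp
  | j + 1, m, ha, hb =>
    calc qVandermondeTerm a b m ≤ 2 / 9 * qVandermondeTerm a b (m + 1) :=
          qVandermondeTerm_le_two_ninths_mul_succ (by omega) (by omega)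
      _ ≤ 2 / 9 * ((2 / 9) ^ j * qVandermondeTerm a b (m + 1 + j)) := by
          gcongr
          exact qVandermondeTerm_le_pow_mul j (m + 1) (by omega) (by omega)
      _ = (2 / 9) ^ (j + 1) * qVandermondeTerm a b (m + (j + 1)) := by
          rw [add_assoc, add_comm 1 j]; ring

lemma qVandermondeTerm_self_le (a b : ℕ) : qVandermondeTerm a b b ≤ gbinomR (a + b) b := by
  rw [qVandermondeTerm, gbinomR_self, mul_one]
  exact two_pow_sq_mul_gbinomR_le a b

lemma qVandermondeTerm_pred_le {a j : ℕ} (h : j + 1 ≤ a) :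
    qVandermondeTerm a (j + 1) j ≤ gbinomR (a + (j + 1)) (j + 1) := by
  have he : 0 < (2 : ℝ) ^ (j + 1) - 1 := two_pow_sub_one_pos j.succ_ne_zero
  have he2 : ((2 : ℝ) ^ (j + 1) - 1) ^ 2 ≤ 2 ^ (a + j + 1) - 1 := by
    have : (2 : ℝ) ^ (j + 1) * 2 ^ (j + 1) ≤ 2 ^ (a + j + 1) := by
      rw [← pow_add]; exact pow_le_pow_right₀ one_le_two (by omega)
    nlinarith [one_lt_pow₀ (M₀ := ℝ) one_lt_two j.succ_ne_zero]
  rw [qVandermondeTerm, gbinomR_succ_left_self, ← add_assoc, gbinomR_succ_succ,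
    le_div_iff₀ he]
  calc _ = 2 ^ (j ^ 2) * gbinomR a j * ((2 : ℝ) ^ (j + 1) - 1) ^ 2 := by ring
    _ ≤ _ := mul_le_mul (two_pow_sq_mul_gbinomR_le a j) he2 (by positivity) (gbinomR_nonneg _ _)

lemma qVandermondeTerm_le_of_lt {a b m : ℕ} (hba : b ≤ a) (hmb : m < b) :
    qVandermondeTerm a b m ≤ (2 / 9) ^ (b - 1 - m) * gbinomR (a + b) b := by
  obtain ⟨j, rfl⟩ : ∃ j, b = j + 1 := ⟨b - 1, by omega⟩
  calc qVandermondeTerm a (j + 1) m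
      ≤ (2 / 9) ^ (j + 1 - 1 - m) * qVandermondeTerm a (j + 1) (m + (j + 1 - 1 - m)) :=
        qVandermondeTerm_le_pow_mul _ _ (by omega) (by omega)
    _ ≤ (2 / 9) ^ (j + 1 - 1 - m) * gbinomR (a + (j + 1)) (j + 1) := by
        rw [show m + (j + 1 - 1 - m) = j by omega]
        gcongr
        exact qVandermondeTerm_pred_le (by omega)

lemma geom_sum₂_le_pow_div {x y : ℝ} (hy : 0 ≤ y) (hyx : y < x) (n : ℕ) :
    ∑ i ∈ range n, x ^ i * y ^ (n - 1 - i) ≤ x ^ n / (x - y) := by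
  rw [le_div_iff₀ (sub_pos.2 hyx), geom_sum₂_mul]
  linarith [pow_nonneg hy n]

lemma two_rpow_neg_half (m : ℕ) : (2 : ℝ) ^ (-(m : ℝ) / 2) = (√2)⁻¹ ^ m := by
  rw [show -(m : ℝ) / 2 = 1 / 2 * -(m : ℝ) by ring, Real.rpow_mul zero_le_two,
    ← Real.sqrt_eq_rpow, Real.rpow_neg (Real.sqrt_nonneg 2), Real.rpow_natCast, inv_pow]

lemma two_ninths_lt_inv_sqrt_two : 2 / 9 < (√2)⁻¹ := by
  have hs : √2 < 2 := by rw [Real.sqrt_lt' two_pos]; norm_num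
  calc (2 : ℝ) / 9 < 2⁻¹ := by norm_num
    _ < (√2)⁻¹ := (inv_lt_inv₀ two_pos (by positivity)).2 hs

lemma gR_constant_eq : 9 / (2 * (9 / (2 * √2) - 1)) = 1 / ((√2)⁻¹ - 2 / 9) := by
  have hs : √2 < 2 := by rw [Real.sqrt_lt' two_pos]; norm_num
  have h1 : (0 : ℝ) < √2 := by positivity
  have h2 : 9 - 2 * √2 ≠ 0 := by linarith
  field_simp

/-- For `0 ≤ k` and `2k ≤ n`,
`g(n,k) ≤ C·2^{-k/2}` where `C = 9/(2(9/(2√2) - 1)) + 1`. -/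
theorem gR_le {n k : ℕ} (hn : 2 * k ≤ n) :
    gR n k ≤ (9 / (2 * (9 / (2 * Real.sqrt 2) - 1)) + 1) * (2 : ℝ) ^ (-(k : ℝ) / 2) := by
  obtain ⟨a, rfl⟩ : ∃ a, n = a + k := ⟨n - k, by omega⟩
  set t : ℝ := (√2)⁻¹
  set N := gbinomR (a + k) k
  have hN : 0 < N := gbinomR_pos (by omega)
  have hterm : ∀ m ∈ range k,
      qVandermondeTerm a k m * t ^ m ≤ N * (t ^ m * (2 / 9) ^ (k - 1 - m)) := fun m hm => by
    rw [show N * (t ^ m * (2 / 9) ^ (k - 1 - m)) = (2 / 9) ^ (k - 1 - m) * N * t ^ m by ring]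
    exact mul_le_mul_of_nonneg_right
      (qVandermondeTerm_le_of_lt (a := a) (by omega) (mem_range.1 hm)) (by positivity)
  calc gR (a + k) k
      = N⁻¹ * (∑ m ∈ range k, qVandermondeTerm a k m * t ^ m +
          qVandermondeTerm a k k * t ^ k) := by
        simp only [gR, Nat.add_sub_cancel, two_rpow_neg_half, sum_range_succ]; rfl
    _ ≤ N⁻¹ * (∑ m ∈ range k, N * (t ^ m * (2 / 9) ^ (k - 1 - m)) + N * t ^ k) := by
        refine mul_le_mul_of_nonneg_left (add_le_add (sum_le_sum hterm) ?_) (inv_nonneg.2 hN.le)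
        exact mul_le_mul_of_nonneg_right (qVandermondeTerm_self_le a k) (by positivity)
    _ = ∑ m ∈ range k, t ^ m * (2 / 9) ^ (k - 1 - m) + t ^ k := by
        rw [← mul_sum]; field_simp
    _ ≤ t ^ k / (t - 2 / 9) + t ^ k := by
        gcongr
        exact geom_sum₂_le_pow_div (by norm_num) two_ninths_lt_inv_sqrt_two k
    _ = _ := by rw [two_rpow_neg_half, gR_constant_eq]; ring
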